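/- arXiv:2507.15240 — 2 statements merged into one kernel-verified Lean document; each statement's English description precedes it below -/
import Mathlib

section
/- Suppose φ₁ and φ₂ are coordinate-wise monotone in the sense that φ_k(s) ≤ φ_k(s') whenever s_i ≤ s'_i for all i ∈ P and s_i ≥ s'_i for all i ∈ 𝒩 (k = 1, 2). If a triple (θ, s, t) is feasible for the indicator reformulation IND′, then the rounded triple (θ, r(θ,t), t) is also feasible for IND′, and moreover φ₁(r(θ,t)) ≥ φ₁(s). -/
open Finset

/-- The indicator `𝟙{a > t}` as a real number. -/
noncomputable def indi (a t : ℝ) : ℝ := if a > t then 1 else 0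

/-- `H_t(a,s) = s + [s+a−1−t]₊ − [s+a−t]₊`. -/
noncomputable def hng (t a s : ℝ) : ℝ := s + max (s + a - 1 - t) 0 - max (s + a - t) 0

/-- The predicted label vector `r(θ,t)_i = 𝟙{F θ i > t}`. -/
noncomputable def rvec {Θ I : Type*} (F : Θ → I → ℝ) (θ : Θ) (t : ℝ) (i : I) : ℝ :=
  indi (F θ i) t

/-- `(θ,t)` is non-singular if `F θ i ≠ t` for all `i`. -/
def NonSingular {Θ I : Type*} (F : Θ → I → ℝ) (θ : Θ) (t : ℝ) : Prop := ∀ i, F θ i ≠ t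

/-- `(θ,t)` is feasible for the DMO problem: `t ∈ [0,1]` and `φ₂(r(θ,t)) ≥ α`. -/
def DMOFeasible {Θ I : Type*} (φ₂ : (I → ℝ) → ℝ) (α : ℝ) (F : Θ → I → ℝ)
    (θ : Θ) (t : ℝ) : Prop :=
  t ∈ Set.Icc (0 : ℝ) 1 ∧ φ₂ (rvec F θ t) ≥ α

/-- `(θ,s,t)` is feasible for the indicator reformulation IND′. -/
def INDFeasible {Θ I : Type*} (P N : Finset I) (φ₂ : (I → ℝ) → ℝ) (α : ℝ)
    (F : Θ → I → ℝ) (θ : Θ) (s : I → ℝ) (t : ℝ) : Prop :=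
  (∀ i, s i ∈ Set.Icc (0 : ℝ) 1) ∧ t ∈ Set.Icc (0 : ℝ) 1 ∧
  φ₂ s ≥ α ∧
  (∀ i ∈ P, s i ≤ indi (F θ i) t) ∧ (∀ i ∈ N, indi (F θ i) t ≤ s i)

/-- `(θ,s,t)` is feasible for the hinge reformulation HNG′. -/
def HNGFeasible {Θ I : Type*} (P N : Finset I) (φ₂ : (I → ℝ) → ℝ) (α : ℝ)
    (F : Θ → I → ℝ) (θ : Θ) (s : I → ℝ) (t : ℝ) : Prop :=
  (∀ i, s i ∈ Set.Icc (0 : ℝ) 1) ∧ t ∈ Set.Icc (0 : ℝ) 1 ∧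
  φ₂ s ≥ α ∧
  (∀ i ∈ P, hng t (F θ i) (s i) ≤ 0) ∧ (∀ i ∈ N, 0 ≤ hng t (F θ i) (s i))

/-- `φ` is coordinate-wise monotone: nondecreasing in coordinates in `P` and
nonincreasing in coordinates in `N`, over `[0,1]^I`. -/
def CoordMonotone {I : Type*} (P N : Finset I) (φ : (I → ℝ) → ℝ) : Prop :=
  ∀ s s' : I → ℝ, (∀ i, s i ∈ Set.Icc (0 : ℝ) 1) → (∀ i, s' i ∈ Set.Icc (0 : ℝ) 1) →
    (∀ i ∈ P, s i ≤ s' i) → (∀ i ∈ N, s' i ≤ s i) → φ s ≤ φ s'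

lemma indi_mem_Icc (a t : ℝ) : indi a t ∈ Set.Icc (0 : ℝ) 1 := by
  unfold indi
  split_ifs <;> norm_num

/-- Feasibility for IND′ says exactly that `s` lies below the rounded vector `r(θ,t)` in the
order that `CoordMonotone P N` respects. -/
lemma CoordMonotone.le_rvec_of_INDFeasible {Θ I : Type*} {P N : Finset I} {φ φ₂ : (I → ℝ) → ℝ}
    {α : ℝ} {F : Θ → I → ℝ} {θ : Θ} {s : I → ℝ} {t : ℝ} (hφ : CoordMonotone P N φ)
    (hfeas : INDFeasible P N φ₂ α F θ s t) : φ s ≤ φ (rvec F θ t) :=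
  hφ s _ hfeas.1 (fun _ => indi_mem_Icc _ _) hfeas.2.2.2.1 hfeas.2.2.2.2

theorem stmt_15_general {Θ I : Type*} (P N : Finset I)
    (φ₁ φ₂ : (I → ℝ) → ℝ) (α : ℝ)
    (hmono1 : CoordMonotone P N φ₁) (hmono2 : CoordMonotone P N φ₂)
    (F : Θ → I → ℝ)
    (θ : Θ) (s : I → ℝ) (t : ℝ)
    (hfeas : INDFeasible P N φ₂ α F θ s t) :
    INDFeasible P N φ₂ α F θ (rvec F θ t) t ∧ φ₁ s ≤ φ₁ (rvec F θ t) := by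
  have hround_feas : INDFeasible P N φ₂ α F θ (rvec F θ t) t :=
    ⟨fun _ => indi_mem_Icc _ _, hfeas.2.1, hfeas.2.2.1.trans (hmono2.le_rvec_of_INDFeasible hfeas),
      fun _ _ => le_rfl, fun _ _ => le_rfl⟩
  exact ⟨hround_feas, hmono1.le_rvec_of_INDFeasible hfeas⟩

/-- If `φ₁, φ₂` are coordinate-wise monotone and `(θ,s,t)` is feasible for IND′,
then the rounded triple `(θ, r(θ,t), t)` is also feasible for IND′ and
`φ₁(r(θ,t)) ≥ φ₁(s)`. -/
theorem stmt_15 {Θ I : Type*} [Fintype I] [DecidableEq I] (P N : Finset I)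
    (hPN : P ∪ N = Finset.univ) (hdisj : Disjoint P N)
    (φ₁ φ₂ : (I → ℝ) → ℝ) (α : ℝ)
    (hmono1 : CoordMonotone P N φ₁) (hmono2 : CoordMonotone P N φ₂)
    (F : Θ → I → ℝ) (hF : ∀ θ i, F θ i ∈ Set.Icc (0 : ℝ) 1)
    (θ : Θ) (s : I → ℝ) (t : ℝ)
    (hfeas : INDFeasible P N φ₂ α F θ s t) :
    INDFeasible P N φ₂ α F θ (rvec F θ t) t ∧ φ₁ s ≤ φ₁ (rvec F θ t) :=
  stmt_15_general P N φ₁ φ₂ α hmono1 hmono2 F θ s t hfeas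
end

section
/- Suppose φ₁ and φ₂ are coordinate-wise monotone in the sense that φ_k(s) ≤ φ_k(s') whenever s_i ≤ s'_i for all i ∈ P and s_i ≥ s'_i for all i ∈ 𝒩 (k = 1, 2). Then a non-singular pair (θ*, t*) is a global solution of the DMO problem restricted to non-singular points (i.e., (θ*, t*) is DMO-feasible and φ₁(r(θ*,t*)) ≥ φ₁(r(θ,t)) for every non-singular DMO-feasible pair (θ, t)) if and only if there exists s* ∈ [0,1]^I such that (θ*, s*, t*) is a global solution of HNG′ restricted to non-singular points (i.e., (θ*, s*, t*) is HNG′-feasible and φ₁(s*) ≥ φ₁(s) for every HNG′-feasible triple (θ, s, t) with (θ, t) non-singular). -/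
open Finset

lemma hng_of_lt {t a s : ℝ} (h : a < t) (hs : s ≤ 1) : hng t a s = min s (t - a) := by
  unfold hng
  rw [max_eq_right (by linarith)]
  rcases le_total s (t - a) with h' | h'
  · rw [max_eq_right (by linarith), min_eq_left h']; ring
  · rw [max_eq_left (by linarith), min_eq_right h']; ring

lemma hng_of_gt {t a s : ℝ} (h : t < a) (hs : 0 ≤ s) : hng t a s = max (s - 1) (t - a) := by
  unfold hng
  rw [max_eq_left (show 0 ≤ s + a - t by linarith)]
  rcases le_total (s - 1) (t - a) with h' | h'
  · rw [max_eq_right (by linarith), max_eq_right h']; ring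
  · rw [max_eq_left (by linarith), max_eq_left h']; ring

lemma hng_nonpos_iff {t a s : ℝ} (hs : s ∈ Set.Icc (0 : ℝ) 1) (hne : a ≠ t) :
    hng t a s ≤ 0 ↔ s ≤ indi a t := by
  obtain ⟨hs0, hs1⟩ := hs
  rcases hne.lt_or_gt with h | h
  · rw [hng_of_lt h hs1, indi, if_neg h.not_gt, min_le_iff]
    constructor
    · rintro (h' | h') <;> linarith
    · exact Or.inl
  · rw [hng_of_gt h hs0, indi, if_pos h, max_le_iff]
    exact ⟨fun _ => hs1, fun _ => ⟨by linarith, by linarith⟩⟩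

lemma hng_nonneg_iff {t a s : ℝ} (hs : s ∈ Set.Icc (0 : ℝ) 1) (hne : a ≠ t) :
    0 ≤ hng t a s ↔ indi a t ≤ s := by
  obtain ⟨hs0, hs1⟩ := hs
  rcases hne.lt_or_gt with h | h
  · rw [hng_of_lt h hs1, indi, if_neg h.not_gt, le_min_iff]
    exact ⟨fun _ => hs0, fun _ => ⟨hs0, by linarith⟩⟩
  · rw [hng_of_gt h hs0, indi, if_pos h, le_max_iff]
    constructor
    · rintro (h' | h') <;> linarith
    · intro h'; exact Or.inl (by linarith)

section Feasibility

variable {Θ I : Type*} {P N : Finset I} {φ φ₂ : (I → ℝ) → ℝ} {α : ℝ} {F : Θ → I → ℝ}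
  {θ : Θ} {s : I → ℝ} {t : ℝ}

lemma hngFeasible_iff_indFeasible (hns : NonSingular F θ t) :
    HNGFeasible P N φ₂ α F θ s t ↔ INDFeasible P N φ₂ α F θ s t := by
  unfold HNGFeasible INDFeasible
  constructor
  · rintro ⟨hs, ht, hφ, hP, hN⟩
    exact ⟨hs, ht, hφ, fun i hi => (hng_nonpos_iff (hs i) (hns i)).1 (hP i hi),
      fun i hi => (hng_nonneg_iff (hs i) (hns i)).1 (hN i hi)⟩
  · rintro ⟨hs, ht, hφ, hP, hN⟩
    exact ⟨hs, ht, hφ, fun i hi => (hng_nonpos_iff (hs i) (hns i)).2 (hP i hi),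
      fun i hi => (hng_nonneg_iff (hs i) (hns i)).2 (hN i hi)⟩

lemma INDFeasible.apply_le_apply_rvec (hmono : CoordMonotone P N φ)
    (h : INDFeasible P N φ₂ α F θ s t) : φ s ≤ φ (rvec F θ t) :=
  hmono s _ h.1 (fun _ => indi_mem_Icc _ _) h.2.2.2.1 h.2.2.2.2

lemma INDFeasible.dmoFeasible (hmono₂ : CoordMonotone P N φ₂)
    (h : INDFeasible P N φ₂ α F θ s t) : DMOFeasible φ₂ α F θ t :=
  ⟨h.2.1, h.2.2.1.trans (h.apply_le_apply_rvec hmono₂)⟩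

lemma DMOFeasible.indFeasible_rvec (h : DMOFeasible φ₂ α F θ t) :
    INDFeasible P N φ₂ α F θ (rvec F θ t) t :=
  ⟨fun _ => indi_mem_Icc _ _, h.1, h.2, fun _ _ => le_rfl, fun _ _ => le_rfl⟩

end Feasibility

theorem stmt_17_general {Θ I : Type*} (P N : Finset I)
    (φ₁ φ₂ : (I → ℝ) → ℝ) (α : ℝ)
    (hmono1 : CoordMonotone P N φ₁) (hmono2 : CoordMonotone P N φ₂)
    (F : Θ → I → ℝ)
    (θs : Θ) (ts : ℝ) (hns : NonSingular F θs ts) :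
    (DMOFeasible φ₂ α F θs ts ∧
      ∀ θ t, NonSingular F θ t → DMOFeasible φ₂ α F θ t →
        φ₁ (rvec F θ t) ≤ φ₁ (rvec F θs ts))
    ↔
    (∃ ss : I → ℝ, HNGFeasible P N φ₂ α F θs ss ts ∧
      ∀ θ (s : I → ℝ) t, NonSingular F θ t → HNGFeasible P N φ₂ α F θ s t →
        φ₁ s ≤ φ₁ ss) := by
  constructor
  · rintro ⟨hfeas, hopt⟩
    refine ⟨rvec F θs ts, (hngFeasible_iff_indFeasible hns).2 hfeas.indFeasible_rvec, ?_⟩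
    intro θ s t hns' hf
    have hind := (hngFeasible_iff_indFeasible hns').1 hf
    exact (hind.apply_le_apply_rvec hmono1).trans (hopt θ t hns' (hind.dmoFeasible hmono2))
  · rintro ⟨ss, hf, hopt⟩
    have hind := (hngFeasible_iff_indFeasible hns).1 hf
    refine ⟨hind.dmoFeasible hmono2, fun θ t hns' hfeas => ?_⟩
    have hr := (hngFeasible_iff_indFeasible hns').2 (hfeas.indFeasible_rvec (P := P) (N := N))
    exact (hopt θ _ t hns' hr).trans (hind.apply_le_apply_rvec hmono1)

/-- Suppose `φ₁, φ₂` are coordinate-wise monotone. Then a non-singular pair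
`(θ*, t*)` is a global solution of the DMO problem restricted to non-singular
points iff there exists `s*` such that `(θ*, s*, t*)` is a global solution of the
hinge reformulation HNG′ restricted to non-singular points. -/
theorem stmt_17 {Θ I : Type*} [Fintype I] [DecidableEq I] (P N : Finset I)
    (hPN : P ∪ N = Finset.univ) (hdisj : Disjoint P N)
    (φ₁ φ₂ : (I → ℝ) → ℝ) (α : ℝ)
    (hmono1 : CoordMonotone P N φ₁) (hmono2 : CoordMonotone P N φ₂)
    (F : Θ → I → ℝ) (hF : ∀ θ i, F θ i ∈ Set.Icc (0 : ℝ) 1)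
    (θs : Θ) (ts : ℝ) (hns : NonSingular F θs ts) :
    (DMOFeasible φ₂ α F θs ts ∧
      ∀ θ t, NonSingular F θ t → DMOFeasible φ₂ α F θ t →
        φ₁ (rvec F θ t) ≤ φ₁ (rvec F θs ts))
    ↔
    (∃ ss : I → ℝ, HNGFeasible P N φ₂ α F θs ss ts ∧
      ∀ θ (s : I → ℝ) t, NonSingular F θ t → HNGFeasible P N φ₂ α F θ s t →
        φ₁ s ≤ φ₁ ss) :=
  stmt_17_general P N φ₁ φ₂ α hmono1 hmono2 F θs ts hns
end
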